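/- arXiv:2602.07479 — 2 statements merged into one kernel-verified Lean document; each statement's English description precedes it below -/
import Mathlib

section
/- Let L: ℝ^{m×n} → ℝ be differentiable with ‖∇L(W)‖_F ≤ L₀ for all W and with ∇L M-Lipschitz. Fix W_pt ∈ ℝ^{m×n} and γ_min, γ_max > 0. For (A, B) ∈ ℝ^{r×n} × ℝ^{m×r} with γ_min·I ⪯ AAᵀ ⪯ γ_max·I and γ_min·I ⪯ BᵀB ⪯ γ_max·I, define G := ∇L(W_pt + BA), let X(A,B) be the unique solution of (AAᵀ + BᵀB)·X + X·(AAᵀ + BᵀB) = (BᵀB)⁻¹BᵀGAᵀ + AGᵀB(BᵀB)⁻¹, and define F_A(A,B) := −(BᵀB)⁻¹BᵀG + X(A,B)·A and F_B(A,B) := −(I − B(BᵀB)⁻¹Bᵀ)·G·Aᵀ(AAᵀ)⁻¹ − B·X(A,B). Then for any two such pairs (A,B) and (Ã,B̃): ‖F_A(A,B) − F_A(Ã,B̃)‖_F + ‖F_B(A,B) − F_B(Ã,B̃)‖_F ≤ ( 18·L₀·γ_max²/γ_min³ + 3·M·γ_max^{3/2}/γ_min^{3/2} ) · ( ‖A −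 Ã‖_F + ‖B − B̃‖_F ). -/
open Matrix

/-- Frobenius norm of a real matrix. -/
noncomputable def frobNorm {m n : ℕ} (A : Matrix (Fin m) (Fin n) ℝ) : ℝ :=
  Real.sqrt (∑ i, ∑ j, (A i j) ^ 2)

/-- Frobenius (trace) inner product of two real matrices. -/
def frobInner {m n : ℕ} (A B : Matrix (Fin m) (Fin n) ℝ) : ℝ :=
  ∑ i, ∑ j, A i j * B i j

/-!
The estimate rests on a few operator-norm facts, all proved through the Frobenius inner product:
`‖A‖, ‖B‖ ≤ √γmax`; the pseudoinverses `B⁺ = (BᵀB)⁻¹Bᵀ` and `A⁺ = Aᵀ(AAᵀ)⁻¹` have norm at most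
`1/√γmin`, because `√γmin ‖K⁺N‖ ≤ ‖KK⁺N‖` and `KK⁺` is an orthogonal projection; and the identity
`K⁺ - K̃⁺ = (KᵀK)⁻¹(K - K̃)ᵀ(1 - K̃K̃⁺) - K⁺(K - K̃)K̃⁺` gives `‖B⁺ - B̃⁺‖ ≤ 2‖B - B̃‖/γmin`.
With `Z = B⁺GAᵀ`, the matrix `X` solves the Sylvester equation `SX + XS = Z + Zᵀ` where
`S = AAᵀ + BᵀB ⪰ 2γmin`; pairing it with `X` gives `‖X‖ ≤ ‖Z‖/(2γmin)`, and the same argument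
applied to `X - X̃` bounds the perturbation of the solution. Telescoping `F_A` and `F_B` bounds
every term by `L₀ γmax^(k/2) / γmin^((k+2)/2)` or `M (γmax/γmin)^(k/2)` times
`‖A - Ã‖ + ‖B - B̃‖`, and `γmin ≤ γmax` lifts all of them to the stated constant.
-/

attribute [local instance] Matrix.frobeniusNormedAddCommGroup

lemma mul_le_of_mul_sq_le {x y c : ℝ} (hx : 0 ≤ x) (hy : 0 ≤ y) (h : c * x ^ 2 ≤ x * y) :
    c * x ≤ y := by
  rcases hx.eq_or_lt with rfl | hx
  · simpa using hy
  · exact le_of_mul_le_mul_right (by nlinarith) hx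

section Frobenius

variable {a b d : ℕ}

lemma frobNorm_eq_norm (A : Matrix (Fin a) (Fin b) ℝ) : frobNorm A = ‖A‖ := by
  rw [frobenius_norm_def, frobNorm, Real.sqrt_eq_rpow]
  simp [Real.norm_eq_abs, sq_abs]

lemma frobInner_eq_trace (A B : Matrix (Fin a) (Fin b) ℝ) : frobInner A B = trace (Aᵀ * B) := by
  rw [trace, frobInner, Finset.sum_comm]
  simp [mul_apply]

lemma frobInner_self (A : Matrix (Fin a) (Fin b) ℝ) : frobInner A A = ‖A‖ ^ 2 := by
  rw [← frobNorm_eq_norm, frobNorm, Real.sq_sqrt (by positivity), frobInner]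
  simp [sq]

lemma frobInner_le_norm_mul_norm (A B : Matrix (Fin a) (Fin b) ℝ) :
    frobInner A B ≤ ‖A‖ * ‖B‖ := by
  simp only [← frobNorm_eq_norm, frobNorm, frobInner, ← Finset.sum_product']
  exact Real.sum_mul_le_sqrt_mul_sqrt _ _ _

lemma frobInner_add_right (A B C : Matrix (Fin a) (Fin b) ℝ) :
    frobInner A (B + C) = frobInner A B + frobInner A C := by
  simp [frobInner_eq_trace, Matrix.mul_add]

lemma frobInner_transpose (A B : Matrix (Fin a) (Fin b) ℝ) :
    frobInner Aᵀ Bᵀ = frobInner A B := by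
  rw [frobInner, frobInner, Finset.sum_comm]
  rfl

lemma frobInner_mul_left (K : Matrix (Fin a) (Fin b) ℝ) (N : Matrix (Fin b) (Fin d) ℝ)
    (M : Matrix (Fin a) (Fin d) ℝ) : frobInner (K * N) M = frobInner N (Kᵀ * M) := by
  rw [frobInner_eq_trace, frobInner_eq_trace, transpose_mul, Matrix.mul_assoc]

lemma norm_mul_sq (K : Matrix (Fin a) (Fin b) ℝ) (N : Matrix (Fin b) (Fin d) ℝ) :
    ‖K * N‖ ^ 2 = frobInner N (Kᵀ * K * N) := by
  rw [← frobInner_self, frobInner_mul_left, Matrix.mul_assoc]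

lemma frobInner_mul_nonneg {P : Matrix (Fin b) (Fin b) ℝ} (hP : P.PosSemidef)
    (N : Matrix (Fin b) (Fin d) ℝ) : 0 ≤ frobInner N (P * N) := by
  have := (hP.conjTranspose_mul_mul_same N).trace_nonneg
  rwa [conjTranspose_eq_transpose_of_trivial, Matrix.mul_assoc, ← frobInner_eq_trace] at this

lemma mul_norm_sq_le_frobInner {P : Matrix (Fin b) (Fin b) ℝ} {γ : ℝ}
    (h : (P - γ • 1).PosSemidef) (N : Matrix (Fin b) (Fin d) ℝ) :
    γ * ‖N‖ ^ 2 ≤ frobInner N (P * N) := by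
  have := frobInner_mul_nonneg h N
  simp only [frobInner_eq_trace, ← frobInner_self, Matrix.sub_mul, Matrix.mul_sub, trace_sub,
    Matrix.smul_mul, Matrix.mul_smul, Matrix.one_mul, trace_smul, smul_eq_mul] at this ⊢
  linarith

lemma frobInner_le_mul_norm_sq {P : Matrix (Fin b) (Fin b) ℝ} {γ : ℝ}
    (h : (γ • 1 - P).PosSemidef) (N : Matrix (Fin b) (Fin d) ℝ) :
    frobInner N (P * N) ≤ γ * ‖N‖ ^ 2 := by
  have := frobInner_mul_nonneg h N
  simp only [frobInner_eq_trace, ← frobInner_self, Matrix.sub_mul, Matrix.mul_sub, trace_sub,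
    Matrix.smul_mul, Matrix.mul_smul, Matrix.one_mul, trace_smul, smul_eq_mul] at this ⊢
  linarith

end Frobenius

section OpNorm

variable {a b d : ℕ}

/-- The spectral norm of `K` is at most `c`, phrased as a bound on left multiplication in the
Frobenius norm. -/
def OpNormLe (K : Matrix (Fin a) (Fin b) ℝ) (c : ℝ) : Prop :=
  ∀ ⦃d : ℕ⦄ (N : Matrix (Fin b) (Fin d) ℝ), ‖K * N‖ ≤ c * ‖N‖

namespace OpNormLe

variable {K : Matrix (Fin a) (Fin b) ℝ} {c : ℝ}

lemma norm_mul_transpose_le (h : OpNormLe K c) (N : Matrix (Fin d) (Fin b) ℝ) :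
    ‖N * Kᵀ‖ ≤ c * ‖N‖ := by
  simpa [← frobenius_norm_transpose (N * Kᵀ), transpose_mul, frobenius_norm_transpose]
    using h Nᵀ

lemma transpose (h : OpNormLe K c) (hc : 0 ≤ c) : OpNormLe Kᵀ c := by
  intro d N
  have hsq : 1 * ‖Kᵀ * N‖ ^ 2 ≤ ‖Kᵀ * N‖ * (c * ‖N‖) :=
    calc 1 * ‖Kᵀ * N‖ ^ 2 = frobInner N (K * (Kᵀ * N)) := by
          rw [one_mul, ← frobInner_self, frobInner_mul_left, transpose_transpose]
      _ ≤ ‖N‖ * ‖K * (Kᵀ * N)‖ := frobInner_le_norm_mul_norm _ _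
      _ ≤ ‖N‖ * (c * ‖Kᵀ * N‖) := by gcongr; exact h _
      _ = ‖Kᵀ * N‖ * (c * ‖N‖) := by ring
  simpa using mul_le_of_mul_sq_le (norm_nonneg _) (by positivity) hsq

lemma norm_mul_le_right (h : OpNormLe K c) (hc : 0 ≤ c) (N : Matrix (Fin d) (Fin a) ℝ) :
    ‖N * K‖ ≤ c * ‖N‖ := by
  simpa using (h.transpose hc).norm_mul_transpose_le N

end OpNormLe

lemma opNormLe_sqrt {K : Matrix (Fin a) (Fin b) ℝ} {γ : ℝ} (h : (γ • 1 - Kᵀ * K).PosSemidef) :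
    OpNormLe K √γ := by
  intro d N
  rw [← Real.sqrt_sq (norm_nonneg (K * N)), ← Real.sqrt_sq (norm_nonneg N),
    ← Real.sqrt_mul' _ (sq_nonneg _), norm_mul_sq]
  exact Real.sqrt_le_sqrt (frobInner_le_mul_norm_sq h N)

lemma sqrt_mul_norm_le_norm_mul {K : Matrix (Fin a) (Fin b) ℝ} {γ : ℝ}
    (h : (Kᵀ * K - γ • 1).PosSemidef) (N : Matrix (Fin b) (Fin d) ℝ) :
    √γ * ‖N‖ ≤ ‖K * N‖ := by
  rw [← Real.sqrt_sq (norm_nonneg (K * N)), ← Real.sqrt_sq (norm_nonneg N),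
    ← Real.sqrt_mul' _ (sq_nonneg _), norm_mul_sq]
  exact Real.sqrt_le_sqrt (mul_norm_sq_le_frobInner h N)

lemma isUnit_det_of_posSemidef_sub_smul_one {P : Matrix (Fin b) (Fin b) ℝ} {γ : ℝ}
    (h : (P - γ • 1).PosSemidef) (hγ : 0 < γ) : IsUnit P.det := by
  have := ((PosDef.one.smul hγ).add_posSemidef h).isUnit
  rwa [add_sub_cancel, isUnit_iff_isUnit_det] at this

lemma opNormLe_inv {P : Matrix (Fin b) (Fin b) ℝ} {γ : ℝ} (h : (P - γ • 1).PosSemidef)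
    (hγ : 0 < γ) : OpNormLe P⁻¹ γ⁻¹ := by
  intro d N
  have hPY : P * (P⁻¹ * N) = N := by
    rw [← Matrix.mul_assoc, mul_nonsing_inv _ (isUnit_det_of_posSemidef_sub_smul_one h hγ),
      Matrix.one_mul]
  have hsq : γ * ‖P⁻¹ * N‖ ^ 2 ≤ ‖P⁻¹ * N‖ * ‖N‖ := by
    have := mul_norm_sq_le_frobInner h (P⁻¹ * N)
    rw [hPY] at this
    exact this.trans (frobInner_le_norm_mul_norm _ _)
  rw [le_inv_mul_iff₀ hγ]
  exact mul_le_of_mul_sq_le (norm_nonneg _) (norm_nonneg _) hsq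

lemma opNormLe_one_of_isIdempotentElem {R : Matrix (Fin a) (Fin a) ℝ} (hR : Rᵀ = R)
    (hR' : IsIdempotentElem R) : OpNormLe R 1 := by
  intro d N
  have hsq : 1 * ‖R * N‖ ^ 2 ≤ ‖R * N‖ * ‖N‖ := by
    rw [one_mul, norm_mul_sq, hR, hR'.eq, mul_comm]
    exact frobInner_le_norm_mul_norm _ _
  simpa using mul_le_of_mul_sq_le (norm_nonneg _) (norm_nonneg _) hsq

end OpNorm

section Pinv

variable {a b : ℕ}

/-- The Moore–Penrose pseudoinverse when `K` has full column rank; otherwise `(Kᵀ K)⁻¹` is the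
junk value `0`. -/
noncomputable def pinv (K : Matrix (Fin a) (Fin b) ℝ) : Matrix (Fin b) (Fin a) ℝ :=
  (Kᵀ * K)⁻¹ * Kᵀ

variable {K K' : Matrix (Fin a) (Fin b) ℝ} {γ : ℝ}

lemma transpose_mul_pinv (K : Matrix (Fin a) (Fin b) ℝ) : (K * pinv K)ᵀ = K * pinv K := by
  simp [pinv, transpose_mul, transpose_nonsing_inv, Matrix.mul_assoc]

lemma pinv_mul_self (h : (Kᵀ * K - γ • 1).PosSemidef) (hγ : 0 < γ) : pinv K * K = 1 := by
  rw [pinv, Matrix.mul_assoc, nonsing_inv_mul _ (isUnit_det_of_posSemidef_sub_smul_one h hγ)]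

lemma isIdempotentElem_mul_pinv (h : (Kᵀ * K - γ • 1).PosSemidef) (hγ : 0 < γ) :
    IsIdempotentElem (K * pinv K) := by
  rw [IsIdempotentElem, Matrix.mul_assoc, ← Matrix.mul_assoc (pinv K), pinv_mul_self h hγ,
    Matrix.one_mul]

lemma opNormLe_one_sub_mul_pinv (h : (Kᵀ * K - γ • 1).PosSemidef) (hγ : 0 < γ) :
    OpNormLe (1 - K * pinv K) 1 :=
  opNormLe_one_of_isIdempotentElem (by rw [transpose_sub, transpose_one, transpose_mul_pinv])
    (isIdempotentElem_mul_pinv h hγ).one_sub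

lemma opNormLe_pinv (h : (Kᵀ * K - γ • 1).PosSemidef) (hγ : 0 < γ) :
    OpNormLe (pinv K) (√γ)⁻¹ := by
  intro d N
  rw [le_inv_mul_iff₀ (Real.sqrt_pos.2 hγ)]
  calc √γ * ‖pinv K * N‖ ≤ ‖K * pinv K * N‖ := by
        rw [Matrix.mul_assoc]; exact sqrt_mul_norm_le_norm_mul h _
    _ ≤ ‖N‖ := by
        simpa using opNormLe_one_of_isIdempotentElem (transpose_mul_pinv K)
          (isIdempotentElem_mul_pinv h hγ) N

lemma pinv_sub_pinv (h : (Kᵀ * K - γ • 1).PosSemidef) (h' : (K'ᵀ * K' - γ • 1).PosSemidef)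
    (hγ : 0 < γ) :
    pinv K - pinv K' = (Kᵀ * K)⁻¹ * ((K - K')ᵀ * (1 - K' * pinv K'))
      - pinv K * ((K - K') * pinv K') := by
  have hR : K'ᵀ * (1 - K' * pinv K') = 0 := by
    rw [← transpose_transpose (1 - K' * pinv K'), ← transpose_mul, transpose_sub, transpose_one,
      transpose_mul_pinv, Matrix.sub_mul, Matrix.one_mul, Matrix.mul_assoc, pinv_mul_self h' hγ,
      Matrix.mul_one, sub_self, transpose_zero]
  have e₁ : (Kᵀ * K)⁻¹ * ((K - K')ᵀ * (1 - K' * pinv K')) = pinv K * (1 - K' * pinv K') := by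
    rw [transpose_sub, Matrix.sub_mul, hR, sub_zero, ← Matrix.mul_assoc]
    rfl
  have e₂ : pinv K * ((K - K') * pinv K') = pinv K' - pinv K * (K' * pinv K') := by
    rw [Matrix.sub_mul, Matrix.mul_sub, ← Matrix.mul_assoc, pinv_mul_self h hγ, Matrix.one_mul]
  rw [e₁, e₂, Matrix.mul_sub, Matrix.mul_one]
  abel

lemma norm_pinv_sub_pinv_le (h : (Kᵀ * K - γ • 1).PosSemidef)
    (h' : (K'ᵀ * K' - γ • 1).PosSemidef) (hγ : 0 < γ) :
    ‖pinv K - pinv K'‖ ≤ 2 * (√γ)⁻¹ ^ 2 * ‖K - K'‖ := by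
  have hi : γ⁻¹ = (√γ)⁻¹ ^ 2 := by rw [inv_pow, Real.sq_sqrt hγ.le]
  rw [pinv_sub_pinv h h' hγ]
  calc _ ≤ ‖(Kᵀ * K)⁻¹ * ((K - K')ᵀ * (1 - K' * pinv K'))‖ + ‖pinv K * ((K - K') * pinv K')‖ :=
        norm_sub_le _ _
    _ ≤ γ⁻¹ * (1 * ‖(K - K')ᵀ‖) + (√γ)⁻¹ * ((√γ)⁻¹ * ‖K - K'‖) := by
        gcongr
        · exact (opNormLe_inv (P := Kᵀ * K) h hγ _).trans
            (by gcongr; exact (opNormLe_one_sub_mul_pinv h' hγ).norm_mul_le_right zero_le_one _)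
        · exact (opNormLe_pinv h hγ _).trans (by
            gcongr; exact (opNormLe_pinv h' hγ).norm_mul_le_right (by positivity) _)
    _ = 2 * (√γ)⁻¹ ^ 2 * ‖K - K'‖ := by
        rw [frobenius_norm_transpose, hi]; ring

lemma norm_mul_pinv_sub_le {s i : ℝ} (h : OpNormLe (pinv K) i) (hi : 0 ≤ i)
    (h' : OpNormLe K' s) :
    ‖K * pinv K - K' * pinv K'‖ ≤ i * ‖K - K'‖ + s * ‖pinv K - pinv K'‖ := by
  have e : K * pinv K - K' * pinv K' = (K - K') * pinv K + K' * (pinv K - pinv K') := by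
    simp only [Matrix.sub_mul, Matrix.mul_sub]; abel
  rw [e]
  exact (norm_add_le _ _).trans (add_le_add (h.norm_mul_le_right hi _) (h' _))

end Pinv

section Sylvester

variable {a : ℕ} {S S' X X' C Z Z' : Matrix (Fin a) (Fin a) ℝ} {γ : ℝ}

/-- Pairing the equation with `X`: `⟨X, S X⟩` and `⟨X, X S⟩ = ⟨Xᵀ, Sᵀ Xᵀ⟩` are both `≥ γ ‖X‖²`. -/
lemma mul_norm_le_of_sylvester (hS : (S - γ • 1).PosSemidef) (h : S * X + X * S = C) :
    2 * γ * ‖X‖ ≤ ‖C‖ := by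
  have hST : (Sᵀ - γ • 1).PosSemidef := by simpa using hS.transpose
  have hXS := mul_norm_sq_le_frobInner hST Xᵀ
  rw [frobenius_norm_transpose, ← transpose_mul, frobInner_transpose] at hXS
  have hsq : 2 * γ * ‖X‖ ^ 2 ≤ ‖X‖ * ‖C‖ := by
    have hC : frobInner X C = frobInner X (S * X) + frobInner X (X * S) := by
      rw [← h, frobInner_add_right]
    linarith [mul_norm_sq_le_frobInner hS X, frobInner_le_norm_mul_norm X C]
  exact mul_le_of_mul_sq_le (norm_nonneg _) (norm_nonneg _) hsq

lemma norm_add_transpose_le (Z : Matrix (Fin a) (Fin a) ℝ) : ‖Z + Zᵀ‖ ≤ 2 * ‖Z‖ := by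
  linarith [norm_add_le Z Zᵀ, frobenius_norm_transpose Z]

lemma norm_le_of_sylvester_symm (hS : (S - (2 * γ) • 1).PosSemidef) (hγ : 0 < γ)
    (h : S * X + X * S = Z + Zᵀ) : ‖X‖ ≤ (2 * γ)⁻¹ * ‖Z‖ := by
  rw [le_inv_mul_iff₀ (by positivity)]
  linarith [mul_norm_le_of_sylvester hS h, norm_add_transpose_le Z]

lemma norm_sub_le_of_sylvester_symm (hS : (S - (2 * γ) • 1).PosSemidef) (hγ : 0 < γ)
    (h : S * X + X * S = Z + Zᵀ) (h' : S' * X' + X' * S' = Z' + Z'ᵀ) :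
    ‖X - X'‖ ≤ (2 * γ)⁻¹ * (‖Z - Z'‖ + ‖S - S'‖ * ‖X'‖) := by
  have hdiff : S * (X - X') + (X - X') * S
      = (Z - Z') + (Z - Z')ᵀ - ((S - S') * X' + X' * (S - S')) := by
    rw [transpose_sub, sub_add_sub_comm, ← h, ← h']
    noncomm_ring
  have hSX : ‖(S - S') * X' + X' * (S - S')‖ ≤ 2 * (‖S - S'‖ * ‖X'‖) := by
    linarith [norm_add_le ((S - S') * X') (X' * (S - S')), frobenius_norm_mul (S - S') X',
      frobenius_norm_mul X' (S - S')]
  rw [le_inv_mul_iff₀ (by positivity)]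
  linarith [mul_norm_le_of_sylvester hS hdiff, norm_add_transpose_le (Z - Z'),
    norm_sub_le ((Z - Z') + (Z - Z')ᵀ) ((S - S') * X' + X' * (S - S'))]

end Sylvester

namespace LoRA

variable {m n r : ℕ}

structure WellConditioned (γ Γ : ℝ) (A : Matrix (Fin r) (Fin n) ℝ)
    (B : Matrix (Fin m) (Fin r) ℝ) : Prop where
  A_lower : (A * Aᵀ - γ • 1).PosSemidef
  A_upper : (Γ • 1 - A * Aᵀ).PosSemidef
  B_lower : (Bᵀ * B - γ • 1).PosSemidef
  B_upper : (Γ • 1 - Bᵀ * B).PosSemidef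

namespace WellConditioned

variable {γ Γ : ℝ} {A : Matrix (Fin r) (Fin n) ℝ} {B : Matrix (Fin m) (Fin r) ℝ}

lemma transpose_A_lower (h : WellConditioned γ Γ A B) : (Aᵀᵀ * Aᵀ - γ • 1).PosSemidef := by
  simpa using h.A_lower

lemma opNormLe_transpose_A (h : WellConditioned γ Γ A B) : OpNormLe Aᵀ √Γ :=
  opNormLe_sqrt (by simpa using h.A_upper)

lemma opNormLe_A (h : WellConditioned γ Γ A B) : OpNormLe A √Γ := by
  simpa using h.opNormLe_transpose_A.transpose (Real.sqrt_nonneg _)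

lemma opNormLe_B (h : WellConditioned γ Γ A B) : OpNormLe B √Γ :=
  opNormLe_sqrt h.B_upper

lemma opNormLe_transpose_B (h : WellConditioned γ Γ A B) : OpNormLe Bᵀ √Γ :=
  h.opNormLe_B.transpose (Real.sqrt_nonneg _)

lemma norm_pinv_transpose_sub_le {A' : Matrix (Fin r) (Fin n) ℝ} {B' : Matrix (Fin m) (Fin r) ℝ}
    (h : WellConditioned γ Γ A B) (h' : WellConditioned γ Γ A' B') (hγ : 0 < γ) :
    ‖pinv Aᵀ - pinv A'ᵀ‖ ≤ 2 * (√γ)⁻¹ ^ 2 * ‖A - A'‖ := by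
  have := norm_pinv_sub_pinv_le h.transpose_A_lower h'.transpose_A_lower hγ
  rwa [← transpose_sub, frobenius_norm_transpose] at this

lemma gram_lower (h : WellConditioned γ Γ A B) :
    (A * Aᵀ + Bᵀ * B - (2 * γ) • 1).PosSemidef := by
  have := h.A_lower.add h.B_lower
  rwa [sub_add_sub_comm, ← add_smul, ← two_mul] at this

lemma lower_le_upper [Nonempty (Fin r)] (h : WellConditioned γ Γ A B) : γ ≤ Γ := by
  have := (h.A_lower.add h.A_upper).diag_nonneg (i := Classical.arbitrary _)
  simpa using this

lemma mul_ne_zero [Nonempty (Fin r)] (h : WellConditioned γ Γ A B) (hγ : 0 < γ) :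
    B * A ≠ 0 := by
  intro hBA
  have hA : A = 0 := by
    have := sqrt_mul_norm_le_norm_mul h.B_lower A
    rw [hBA, norm_zero] at this
    exact norm_le_zero_iff.1 (nonpos_of_mul_nonpos_right this (Real.sqrt_pos.2 hγ))
  have := h.A_lower.diag_nonneg (i := Classical.arbitrary _)
  simp [hA] at this
  linarith

end WellConditioned

/-- `F_A(A, B)`, with `G = ∇L(W_pt + B A)` and `X = X(A, B)` passed as arguments. -/
noncomputable def fieldA (G : Matrix (Fin m) (Fin n) ℝ) (X : Matrix (Fin r) (Fin r) ℝ)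
    (A : Matrix (Fin r) (Fin n) ℝ) (B : Matrix (Fin m) (Fin r) ℝ) : Matrix (Fin r) (Fin n) ℝ :=
  -((Bᵀ * B)⁻¹ * Bᵀ * G) + X * A

/-- `F_B(A, B)`, with `G` and `X` as in `fieldA`. -/
noncomputable def fieldB (G : Matrix (Fin m) (Fin n) ℝ) (X : Matrix (Fin r) (Fin r) ℝ)
    (A : Matrix (Fin r) (Fin n) ℝ) (B : Matrix (Fin m) (Fin r) ℝ) : Matrix (Fin m) (Fin r) ℝ :=
  -((1 - B * (Bᵀ * B)⁻¹ * Bᵀ) * G * Aᵀ * (A * Aᵀ)⁻¹) - B * X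

variable {G G' : Matrix (Fin m) (Fin n) ℝ} {X X' : Matrix (Fin r) (Fin r) ℝ}
  {A A' : Matrix (Fin r) (Fin n) ℝ} {B B' : Matrix (Fin m) (Fin r) ℝ} {s i : ℝ}

lemma fieldA_eq_pinv : fieldA G X A B = -(pinv B * G) + X * A := rfl

lemma fieldB_eq_pinv : fieldB G X A B = -((1 - B * pinv B) * (G * (pinv Aᵀ)ᵀ)) - B * X := by
  simp [fieldB, pinv, transpose_mul, transpose_nonsing_inv, Matrix.mul_assoc]

lemma sylvester_rhs_eq_add_transpose :
    (Bᵀ * B)⁻¹ * Bᵀ * G * Aᵀ + A * Gᵀ * B * (Bᵀ * B)⁻¹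
      = pinv B * G * Aᵀ + (pinv B * G * Aᵀ)ᵀ := by
  simp [pinv, transpose_mul, transpose_nonsing_inv, Matrix.mul_assoc]

lemma norm_fieldA_sub_le (hB' : OpNormLe (pinv B') i) (hA : OpNormLe Aᵀ s) :
    ‖fieldA G X A B - fieldA G' X' A' B'‖
      ≤ ‖pinv B - pinv B'‖ * ‖G‖ + i * ‖G - G'‖ + s * ‖X - X'‖ + ‖X'‖ * ‖A - A'‖ := by
  have e : fieldA G X A B - fieldA G' X' A' B' = -((pinv B - pinv B') * G)
      + -(pinv B' * (G - G')) + (X - X') * A + X' * (A - A') := by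
    rw [fieldA_eq_pinv, fieldA_eq_pinv]; simp only [Matrix.sub_mul, Matrix.mul_sub]; abel
  rw [e]
  refine norm_add₄_le.trans ?_
  simp only [norm_neg]
  gcongr
  · exact frobenius_norm_mul _ _
  · exact hB' _
  · simpa using hA.norm_mul_transpose_le (X - X')
  · exact frobenius_norm_mul _ _

lemma norm_fieldB_sub_le (hB : OpNormLe (pinv B) i) (hi : 0 ≤ i) (hB' : OpNormLe B' s)
    (hR' : OpNormLe (1 - B' * pinv B') 1) (hA : OpNormLe (pinv Aᵀ) i) :
    ‖fieldB G X A B - fieldB G' X' A' B'‖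
      ≤ (i * ‖B - B'‖ + s * ‖pinv B - pinv B'‖) * (i * ‖G‖) + i * ‖G - G'‖
        + ‖G'‖ * ‖pinv Aᵀ - pinv A'ᵀ‖ + (‖B - B'‖ * ‖X‖ + s * ‖X - X'‖) := by
  set R := 1 - B' * pinv B'
  have e : fieldB G X A B - fieldB G' X' A' B'
      = (B * pinv B - B' * pinv B') * (G * (pinv Aᵀ)ᵀ) + -(R * ((G - G') * (pinv Aᵀ)ᵀ))
        + -(R * G' * (pinv Aᵀ - pinv A'ᵀ)ᵀ) + -((B - B') * X + B' * (X - X')) := by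
    rw [fieldB_eq_pinv, fieldB_eq_pinv, transpose_sub]
    simp only [R, Matrix.sub_mul, Matrix.mul_sub, Matrix.one_mul, Matrix.mul_assoc]
    abel
  rw [e]
  refine norm_add₄_le.trans ?_
  rw [norm_neg, norm_neg, norm_neg]
  gcongr ?_ + ?_ + ?_ + ?_
  · have hproj := norm_mul_pinv_sub_le hB hi hB'
    exact (frobenius_norm_mul _ _).trans (mul_le_mul hproj (hA.norm_mul_transpose_le G)
      (norm_nonneg _) ((norm_nonneg _).trans hproj))
  · simpa using (hR' _).trans (by simpa using hA.norm_mul_transpose_le (G - G'))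
  · refine (frobenius_norm_mul _ _).trans ?_
    rw [frobenius_norm_transpose]
    gcongr
    simpa using hR' G'
  · exact (norm_add_le _ _).trans (add_le_add (frobenius_norm_mul _ _) (hB' _))

lemma norm_mul_sub_mul_le (hB : OpNormLe B s) (hA' : OpNormLe A'ᵀ s) :
    ‖B * A - B' * A'‖ ≤ s * (‖A - A'‖ + ‖B - B'‖) := by
  have e : B * A - B' * A' = B * (A - A') + (B - B') * A' := by
    simp only [Matrix.sub_mul, Matrix.mul_sub]; abel
  rw [e, mul_add]
  exact (norm_add_le _ _).trans (add_le_add (hB _) (by simpa using hA'.norm_mul_transpose_le _))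

lemma norm_pinv_mul_mul_transpose_le (hA : OpNormLe A s) (hs : 0 ≤ s) (hB : OpNormLe (pinv B) i) :
    ‖pinv B * G * Aᵀ‖ ≤ s * (i * ‖G‖) :=
  (hA.norm_mul_transpose_le _).trans (by gcongr; exact hB G)

lemma norm_pinv_mul_mul_transpose_sub_le (hA : OpNormLe A s) (hs : 0 ≤ s) (hB' : OpNormLe (pinv B') i) :
    ‖pinv B * G * Aᵀ - pinv B' * G' * A'ᵀ‖
      ≤ s * (‖pinv B - pinv B'‖ * ‖G‖ + i * ‖G - G'‖) + i * ‖G'‖ * ‖A - A'‖ := by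
  have e : pinv B * G * Aᵀ - pinv B' * G' * A'ᵀ
      = ((pinv B - pinv B') * G + pinv B' * (G - G')) * Aᵀ + pinv B' * G' * (A - A')ᵀ := by
    simp only [transpose_sub, Matrix.sub_mul, Matrix.mul_sub, Matrix.add_mul]; abel
  rw [e]
  refine (norm_add_le _ _).trans (add_le_add ((hA.norm_mul_transpose_le _).trans ?_) ?_)
  · gcongr
    exact (norm_add_le _ _).trans (add_le_add (frobenius_norm_mul _ _) (hB' _))
  · rw [← frobenius_norm_transpose (A - A')]
    exact (frobenius_norm_mul _ _).trans (by gcongr; exact hB' _)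

lemma norm_gram_sub_le (hA : OpNormLe A s) (hA' : OpNormLe A' s) (hB : OpNormLe Bᵀ s)
    (hB' : OpNormLe B'ᵀ s) :
    ‖A * Aᵀ + Bᵀ * B - (A' * A'ᵀ + B'ᵀ * B')‖ ≤ 2 * s * (‖A - A'‖ + ‖B - B'‖) := by
  have e : A * Aᵀ + Bᵀ * B - (A' * A'ᵀ + B'ᵀ * B')
      = A * (A - A')ᵀ + (A - A') * A'ᵀ + (Bᵀ * (B - B') + (B - B')ᵀ * B') := by
    simp only [transpose_sub, Matrix.sub_mul, Matrix.mul_sub]; abel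
  have h₁ := hA (A - A')ᵀ
  have h₂ := hA'.norm_mul_transpose_le (A - A')
  have h₃ := hB (B - B')
  have h₄ := hB'.norm_mul_transpose_le (B - B')ᵀ
  simp only [frobenius_norm_transpose, transpose_transpose] at h₁ h₄
  rw [e]
  linarith [norm_add₃_le (a := A * (A - A')ᵀ) (b := (A - A') * A'ᵀ)
    (c := Bᵀ * (B - B') + (B - B')ᵀ * B'), norm_add_le (Bᵀ * (B - B')) ((B - B')ᵀ * B')]

lemma norm_solution_le {γ : ℝ} (hS : (A * Aᵀ + Bᵀ * B - (2 * γ) • 1).PosSemidef) (hγ : 0 < γ)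
    (hA : OpNormLe A s) (hs : 0 ≤ s) (hB : OpNormLe (pinv B) i)
    (hX : (A * Aᵀ + Bᵀ * B) * X + X * (A * Aᵀ + Bᵀ * B) = pinv B * G * Aᵀ + (pinv B * G * Aᵀ)ᵀ) :
    ‖X‖ ≤ (2 * γ)⁻¹ * (s * (i * ‖G‖)) :=
  (norm_le_of_sylvester_symm hS hγ hX).trans (by gcongr; exact norm_pinv_mul_mul_transpose_le hA hs hB)

lemma norm_solution_sub_le {γ : ℝ} (hS : (A * Aᵀ + Bᵀ * B - (2 * γ) • 1).PosSemidef)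
    (hγ : 0 < γ) (hA : OpNormLe A s) (hA' : OpNormLe A' s) (hB : OpNormLe Bᵀ s)
    (hB' : OpNormLe B'ᵀ s) (hs : 0 ≤ s) (hpB' : OpNormLe (pinv B') i)
    (hX : (A * Aᵀ + Bᵀ * B) * X + X * (A * Aᵀ + Bᵀ * B) = pinv B * G * Aᵀ + (pinv B * G * Aᵀ)ᵀ)
    (hX' : (A' * A'ᵀ + B'ᵀ * B') * X' + X' * (A' * A'ᵀ + B'ᵀ * B')
      = pinv B' * G' * A'ᵀ + (pinv B' * G' * A'ᵀ)ᵀ) :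
    ‖X - X'‖ ≤ (2 * γ)⁻¹ * (s * (‖pinv B - pinv B'‖ * ‖G‖ + i * ‖G - G'‖)
      + i * ‖G'‖ * ‖A - A'‖ + 2 * s * (‖A - A'‖ + ‖B - B'‖) * ‖X'‖) :=
  (norm_sub_le_of_sylvester_symm hS hγ hX hX').trans (by
    gcongr
    exacts [norm_pinv_mul_mul_transpose_sub_le hA hs hpB', norm_gram_sub_le hA hA' hB hB'])

lemma rpow_three_halves {x : ℝ} (hx : 0 ≤ x) : x ^ ((3 : ℝ) / 2) = √x ^ 3 := by
  rw [Real.sqrt_eq_rpow, ← Real.rpow_natCast, ← Real.rpow_mul hx]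
  norm_num

lemma lipschitz_constant_eq {γ Γ L₀ M : ℝ} (hγ : 0 ≤ γ) (hΓ : 0 ≤ Γ) :
    18 * L₀ * Γ ^ 2 / γ ^ 3 + 3 * M * Γ ^ ((3 : ℝ) / 2) / γ ^ ((3 : ℝ) / 2)
      = 18 * L₀ * √Γ ^ 4 * (√γ)⁻¹ ^ 6 + 3 * M * √Γ ^ 3 * (√γ)⁻¹ ^ 3 := by
  have hΓ2 : Γ ^ 2 = √Γ ^ 4 := by rw [show √Γ ^ 4 = (√Γ ^ 2) ^ 2 by ring, Real.sq_sqrt hΓ]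
  have hγ3 : γ ^ 3 = √γ ^ 6 := by rw [show √γ ^ 6 = (√γ ^ 2) ^ 3 by ring, Real.sq_sqrt hγ]
  rw [rpow_three_halves hγ, rpow_three_halves hΓ, hΓ2, hγ3]
  simp only [div_eq_mul_inv, inv_pow]

lemma lipschitz_coeff_le {s i L₀ M : ℝ} (hsi : 1 ≤ s * i)
    (hL₀ : 0 ≤ L₀) (hM : 0 ≤ M) :
    5 * L₀ * i ^ 2 + 4 * L₀ * s * i ^ 3 + 2 * L₀ * s ^ 2 * i ^ 4 + L₀ * s ^ 3 * i ^ 5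
      + 2 * M * s * i + M * s ^ 3 * i ^ 3 ≤ 18 * L₀ * s ^ 4 * i ^ 6 + 3 * M * s ^ 3 * i ^ 3 := by
  have hκ : ∀ k ≤ 4, L₀ * i ^ 2 * (s * i) ^ k ≤ L₀ * i ^ 2 * (s * i) ^ 4 :=
    fun k hk ↦ by gcongr
  have hκM : M * (s * i) ≤ M * (s * i) ^ 3 := by
    gcongr; simpa using pow_le_pow_right₀ hsi (show 1 ≤ 3 by norm_num)
  have hU : 0 ≤ L₀ * i ^ 2 * (s * i) ^ 4 := by positivity
  linarith [hκ 0 (by norm_num), hκ 1 (by norm_num), hκ 2 (by norm_num), hκ 3 (by norm_num)]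

theorem norm_field_sub_le {γ Γ L₀ M : ℝ} (hγ : 0 < γ) (hγΓ : γ ≤ Γ) (hM : 0 ≤ M)
    (h : WellConditioned γ Γ A B) (h' : WellConditioned γ Γ A' B')
    (hG : ‖G‖ ≤ L₀) (hG' : ‖G'‖ ≤ L₀) (hGG' : ‖G - G'‖ ≤ M * ‖B * A - B' * A'‖)
    (hX : (A * Aᵀ + Bᵀ * B) * X + X * (A * Aᵀ + Bᵀ * B)
      = (Bᵀ * B)⁻¹ * Bᵀ * G * Aᵀ + A * Gᵀ * B * (Bᵀ * B)⁻¹)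
    (hX' : (A' * A'ᵀ + B'ᵀ * B') * X' + X' * (A' * A'ᵀ + B'ᵀ * B')
      = (B'ᵀ * B')⁻¹ * B'ᵀ * G' * A'ᵀ + A' * G'ᵀ * B' * (B'ᵀ * B')⁻¹) :
    ‖fieldA G X A B - fieldA G' X' A' B'‖ + ‖fieldB G X A B - fieldB G' X' A' B'‖
      ≤ (18 * L₀ * √Γ ^ 4 * (√γ)⁻¹ ^ 6 + 3 * M * √Γ ^ 3 * (√γ)⁻¹ ^ 3)
        * (‖A - A'‖ + ‖B - B'‖) := by
  rw [sylvester_rhs_eq_add_transpose] at hX hX'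
  -- `s` bounds the norms of the factors, `i` those of their pseudoinverses
  set s := √Γ
  set i := (√γ)⁻¹
  set δ := ‖A - A'‖ + ‖B - B'‖
  have hs : 0 ≤ s := Real.sqrt_nonneg _
  have hi : 0 ≤ i := by positivity
  have hsi : 1 ≤ s * i := by
    rw [← div_eq_mul_inv, one_le_div (Real.sqrt_pos.2 hγ)]; exact Real.sqrt_le_sqrt hγΓ
  have hL₀ : 0 ≤ L₀ := (norm_nonneg _).trans hG
  have hδA : ‖A - A'‖ ≤ δ := le_add_of_nonneg_right (norm_nonneg _)
  have hδB : ‖B - B'‖ ≤ δ := le_add_of_nonneg_left (norm_nonneg _)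
  have hpB := opNormLe_pinv h.B_lower hγ
  have hpB' := opNormLe_pinv h'.B_lower hγ
  have hΔB : ‖pinv B - pinv B'‖ ≤ 2 * i ^ 2 * δ :=
    (norm_pinv_sub_pinv_le h.B_lower h'.B_lower hγ).trans (by gcongr)
  have hΔA : ‖pinv Aᵀ - pinv A'ᵀ‖ ≤ 2 * i ^ 2 * δ :=
    (h.norm_pinv_transpose_sub_le h' hγ).trans (by gcongr)
  have hΔG : ‖G - G'‖ ≤ M * (s * δ) :=
    hGG'.trans (by gcongr; exact norm_mul_sub_mul_le h.opNormLe_B h'.opNormLe_transpose_A)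
  have h2γ : (2 * γ)⁻¹ = i ^ 2 / 2 := by rw [inv_pow, Real.sq_sqrt hγ.le]; ring
  set x₀ := i ^ 2 / 2 * (s * (i * L₀)) with hx₀
  have hX₀ : ‖X‖ ≤ x₀ := (norm_solution_le h.gram_lower hγ h.opNormLe_A hs hpB hX).trans
    (by rw [h2γ, hx₀]; gcongr)
  have hX₀' : ‖X'‖ ≤ x₀ := (norm_solution_le h'.gram_lower hγ h'.opNormLe_A hs hpB' hX').trans
    (by rw [h2γ, hx₀]; gcongr)
  set ξ := i ^ 2 / 2 * (s * (2 * i ^ 2 * δ * L₀ + i * (M * (s * δ))) + i * L₀ * δ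
    + 2 * s * δ * x₀) with hξ
  have hΔX : ‖X - X'‖ ≤ ξ := (norm_solution_sub_le h.gram_lower hγ h.opNormLe_A h'.opNormLe_A
    h.opNormLe_transpose_B h'.opNormLe_transpose_B hs hpB' hX hX').trans (by rw [h2γ, hξ]; gcongr)
  have hFA : ‖fieldA G X A B - fieldA G' X' A' B'‖
      ≤ 2 * i ^ 2 * δ * L₀ + i * (M * (s * δ)) + s * ξ + x₀ * δ :=
    (norm_fieldA_sub_le hpB' h.opNormLe_transpose_A).trans (by gcongr)
  have hFB : ‖fieldB G X A B - fieldB G' X' A' B'‖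
      ≤ (i * δ + s * (2 * i ^ 2 * δ)) * (i * L₀) + i * (M * (s * δ)) + L₀ * (2 * i ^ 2 * δ)
        + (δ * x₀ + s * ξ) :=
    (norm_fieldB_sub_le hpB hi h'.opNormLe_B (opNormLe_one_sub_mul_pinv h'.B_lower hγ)
      (opNormLe_pinv h.transpose_A_lower hγ)).trans (by gcongr)
  calc _ ≤ _ := add_le_add hFA hFB
    _ = (5 * L₀ * i ^ 2 + 4 * L₀ * s * i ^ 3 + 2 * L₀ * s ^ 2 * i ^ 4 + L₀ * s ^ 3 * i ^ 5
          + 2 * M * s * i + M * s ^ 3 * i ^ 3) * δ := by rw [hξ, hx₀]; ring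
    _ ≤ _ := mul_le_mul_of_nonneg_right (lipschitz_coeff_le hsi hL₀ hM)
          (add_nonneg (norm_nonneg _) (norm_nonneg _))

end LoRA

theorem odelora_field_lipschitz_general {m n r : ℕ}
    (gradL : Matrix (Fin m) (Fin n) ℝ → Matrix (Fin m) (Fin n) ℝ)
    (L₀ M : ℝ)
    (hbound : ∀ W, frobNorm (gradL W) ≤ L₀)
    (hlip : ∀ W W' : Matrix (Fin m) (Fin n) ℝ,
      frobNorm (gradL W - gradL W') ≤ M * frobNorm (W - W'))
    (Wpt : Matrix (Fin m) (Fin n) ℝ)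
    (γmin γmax : ℝ) (hγmin : 0 < γmin)
    (A At : Matrix (Fin r) (Fin n) ℝ) (B Bt : Matrix (Fin m) (Fin r) ℝ)
    (hA1 : (A * Aᵀ - γmin • (1 : Matrix (Fin r) (Fin r) ℝ)).PosSemidef)
    (hA2 : (γmax • (1 : Matrix (Fin r) (Fin r) ℝ) - A * Aᵀ).PosSemidef)
    (hB1 : (Bᵀ * B - γmin • (1 : Matrix (Fin r) (Fin r) ℝ)).PosSemidef)
    (hB2 : (γmax • (1 : Matrix (Fin r) (Fin r) ℝ) - Bᵀ * B).PosSemidef)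
    (hA1t : (At * Atᵀ - γmin • (1 : Matrix (Fin r) (Fin r) ℝ)).PosSemidef)
    (hA2t : (γmax • (1 : Matrix (Fin r) (Fin r) ℝ) - At * Atᵀ).PosSemidef)
    (hB1t : (Btᵀ * Bt - γmin • (1 : Matrix (Fin r) (Fin r) ℝ)).PosSemidef)
    (hB2t : (γmax • (1 : Matrix (Fin r) (Fin r) ℝ) - Btᵀ * Bt).PosSemidef)
    (X Xt : Matrix (Fin r) (Fin r) ℝ)
    (hX : (A * Aᵀ + Bᵀ * B) * X + X * (A * Aᵀ + Bᵀ * B)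
        = (Bᵀ * B)⁻¹ * Bᵀ * gradL (Wpt + B * A) * Aᵀ
          + A * (gradL (Wpt + B * A))ᵀ * B * (Bᵀ * B)⁻¹)
    (hXt : (At * Atᵀ + Btᵀ * Bt) * Xt + Xt * (At * Atᵀ + Btᵀ * Bt)
        = (Btᵀ * Bt)⁻¹ * Btᵀ * gradL (Wpt + Bt * At) * Atᵀ
          + At * (gradL (Wpt + Bt * At))ᵀ * Bt * (Btᵀ * Bt)⁻¹) :
    let FA : Matrix (Fin r) (Fin n) ℝ :=
      -((Bᵀ * B)⁻¹ * Bᵀ * gradL (Wpt + B * A)) + X * A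
    let FB : Matrix (Fin m) (Fin r) ℝ :=
      -(((1 : Matrix (Fin m) (Fin m) ℝ) - B * (Bᵀ * B)⁻¹ * Bᵀ) *
          gradL (Wpt + B * A) * Aᵀ * (A * Aᵀ)⁻¹) - B * X
    let FAt : Matrix (Fin r) (Fin n) ℝ :=
      -((Btᵀ * Bt)⁻¹ * Btᵀ * gradL (Wpt + Bt * At)) + Xt * At
    let FBt : Matrix (Fin m) (Fin r) ℝ :=
      -(((1 : Matrix (Fin m) (Fin m) ℝ) - Bt * (Btᵀ * Bt)⁻¹ * Btᵀ) *
          gradL (Wpt + Bt * At) * Atᵀ * (At * Atᵀ)⁻¹) - Bt * Xt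
    frobNorm (FA - FAt) + frobNorm (FB - FBt)
      ≤ (18 * L₀ * γmax ^ 2 / γmin ^ 3
          + 3 * M * γmax ^ ((3:ℝ)/2) / γmin ^ ((3:ℝ)/2))
        * (frobNorm (A - At) + frobNorm (B - Bt)) := by
  intro FA FB FAt FBt
  simp only [frobNorm_eq_norm] at hbound hlip ⊢
  rcases isEmpty_or_nonempty (Fin r) with hr | hr
  · simp [Subsingleton.elim (FA - FAt) 0, Subsingleton.elim (FB - FBt) 0,
      Subsingleton.elim (A - At) 0, Subsingleton.elim (B - Bt) 0]
  have h : LoRA.WellConditioned γmin γmax A B := ⟨hA1, hA2, hB1, hB2⟩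
  have ht : LoRA.WellConditioned γmin γmax At Bt := ⟨hA1t, hA2t, hB1t, hB2t⟩
  have hM : 0 ≤ M := nonneg_of_mul_nonneg_left ((norm_nonneg _).trans (hlip (Wpt + B * A) Wpt))
    (by simpa using h.mul_ne_zero hγmin)
  rw [LoRA.lipschitz_constant_eq hγmin.le (hγmin.le.trans h.lower_le_upper)]
  exact LoRA.norm_field_sub_le hγmin h.lower_le_upper hM h ht (hbound _) (hbound _)
    (by simpa using hlip (Wpt + B * A) (Wpt + Bt * At)) hX hXt

/-- Lipschitz continuity of the ODELoRA vector field `(F_A, F_B)` with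
respect to the LoRA factors `(A, B)`. -/
theorem odelora_field_lipschitz {m n r : ℕ}
    (L : Matrix (Fin m) (Fin n) ℝ → ℝ)
    (gradL : Matrix (Fin m) (Fin n) ℝ → Matrix (Fin m) (Fin n) ℝ)
    -- `gradL` is the gradient of the differentiable function `L`
    (hgrad : ∀ (W Δ : Matrix (Fin m) (Fin n) ℝ),
      HasDerivAt (fun t : ℝ => L (W + t • Δ)) (frobInner (gradL W) Δ) 0)
    (L₀ M : ℝ)
    (hbound : ∀ W, frobNorm (gradL W) ≤ L₀)
    (hlip : ∀ W W' : Matrix (Fin m) (Fin n) ℝ,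
      frobNorm (gradL W - gradL W') ≤ M * frobNorm (W - W'))
    (Wpt : Matrix (Fin m) (Fin n) ℝ)
    (γmin γmax : ℝ) (hγmin : 0 < γmin) (hγmax : 0 < γmax)
    (A At : Matrix (Fin r) (Fin n) ℝ) (B Bt : Matrix (Fin m) (Fin r) ℝ)
    (hA1 : (A * Aᵀ - γmin • (1 : Matrix (Fin r) (Fin r) ℝ)).PosSemidef)
    (hA2 : (γmax • (1 : Matrix (Fin r) (Fin r) ℝ) - A * Aᵀ).PosSemidef)
    (hB1 : (Bᵀ * B - γmin • (1 : Matrix (Fin r) (Fin r) ℝ)).PosSemidef)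
    (hB2 : (γmax • (1 : Matrix (Fin r) (Fin r) ℝ) - Bᵀ * B).PosSemidef)
    (hA1t : (At * Atᵀ - γmin • (1 : Matrix (Fin r) (Fin r) ℝ)).PosSemidef)
    (hA2t : (γmax • (1 : Matrix (Fin r) (Fin r) ℝ) - At * Atᵀ).PosSemidef)
    (hB1t : (Btᵀ * Bt - γmin • (1 : Matrix (Fin r) (Fin r) ℝ)).PosSemidef)
    (hB2t : (γmax • (1 : Matrix (Fin r) (Fin r) ℝ) - Btᵀ * Bt).PosSemidef)
    (X Xt : Matrix (Fin r) (Fin r) ℝ)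
    (hX : (A * Aᵀ + Bᵀ * B) * X + X * (A * Aᵀ + Bᵀ * B)
        = (Bᵀ * B)⁻¹ * Bᵀ * gradL (Wpt + B * A) * Aᵀ
          + A * (gradL (Wpt + B * A))ᵀ * B * (Bᵀ * B)⁻¹)
    (hXt : (At * Atᵀ + Btᵀ * Bt) * Xt + Xt * (At * Atᵀ + Btᵀ * Bt)
        = (Btᵀ * Bt)⁻¹ * Btᵀ * gradL (Wpt + Bt * At) * Atᵀ
          + At * (gradL (Wpt + Bt * At))ᵀ * Bt * (Btᵀ * Bt)⁻¹) :
    let FA : Matrix (Fin r) (Fin n) ℝ :=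
      -((Bᵀ * B)⁻¹ * Bᵀ * gradL (Wpt + B * A)) + X * A
    let FB : Matrix (Fin m) (Fin r) ℝ :=
      -(((1 : Matrix (Fin m) (Fin m) ℝ) - B * (Bᵀ * B)⁻¹ * Bᵀ) *
          gradL (Wpt + B * A) * Aᵀ * (A * Aᵀ)⁻¹) - B * X
    let FAt : Matrix (Fin r) (Fin n) ℝ :=
      -((Btᵀ * Bt)⁻¹ * Btᵀ * gradL (Wpt + Bt * At)) + Xt * At
    let FBt : Matrix (Fin m) (Fin r) ℝ :=
      -(((1 : Matrix (Fin m) (Fin m) ℝ) - Bt * (Btᵀ * Bt)⁻¹ * Btᵀ) *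
          gradL (Wpt + Bt * At) * Atᵀ * (At * Atᵀ)⁻¹) - Bt * Xt
    frobNorm (FA - FAt) + frobNorm (FB - FBt)
      ≤ (18 * L₀ * γmax ^ 2 / γmin ^ 3
          + 3 * M * γmax ^ ((3:ℝ)/2) / γmin ^ ((3:ℝ)/2))
        * (frobNorm (A - At) + frobNorm (B - Bt)) :=
  odelora_field_lipschitz_general gradL L₀ M hbound hlip Wpt γmin γmax hγmin A At B Bt hA1 hA2 hB1
    hB2 hA1t hA2t hB1t hB2t X Xt hX hXt
end

section
/- Let γ_min, γ_max > 0, let A ∈ ℝ^{r×n} and B ∈ ℝ^{m×r} satisfy γ_min·I ⪯ AAᵀ ⪯ γ_max·I and γ_min·I ⪯ BᵀB ⪯ γ_max·I, and let G ∈ ℝ^{m×n} with ‖G‖_F ≤ L₀. Let X be the unique solution of (AAᵀ + BᵀB)·X + X·(AAᵀ + BᵀB) = (BᵀB)⁻¹BᵀGAᵀ + AGᵀB(BᵀB)⁻¹, and define F_A := −(BᵀB)⁻¹BᵀG + X·A and F_B := −(I − B(BᵀB)⁻¹Bᵀ)·G·Aᵀ(AAᵀ)⁻¹ − B·X. Then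 ‖F_A‖_F + ‖F_B‖_F ≤ 2·L₀/√γ_min + L₀·γ_max/γ_min^{3/2}. -/
/-! Each field is an explicit term driven by `G` plus a term linear in `X`.
With `P = B (BᵀB)⁻¹ Bᵀ` an orthogonal projection, `Y = (BᵀB)⁻¹ Bᵀ G` satisfies
`√γmin ‖Y‖ ≤ ‖B Y‖ = ‖P G‖ ≤ ‖G‖`; the mirror argument on the right bounds
`(1 - P) G Aᵀ (AAᵀ)⁻¹` by `‖G‖ / √γmin` as well. The Sylvester equation reads
`M X + X M = Y Aᵀ + A Yᵀ` with `M = AAᵀ + BᵀB ⪰ 2γmin I`, and pairing it with `X` gives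
`4γmin ‖X‖² ≤ ⟨X A, Y⟩ + ⟨Xᵀ A, Y⟩ ≤ 2 √γmax ‖X‖ ‖Y‖`. Hence
`√γmax ‖X‖ ≤ γmax ‖G‖ / (2 γmin^{3/2})`, which bounds `‖X A‖` and `‖B X‖`. -/

open Matrix

attribute [local instance] Matrix.frobeniusNormedAddCommGroup

-- Under `MatrixOrder`, `M ≤ N` unfolds to `(N - M).PosSemidef`, the form of the hypotheses.
open scoped MatrixOrder

namespace Matrix

theorem isUnit_det_of_smul_one_le {m : Type*} [Fintype m] [DecidableEq m] {γ : ℝ}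
    (hγ : 0 < γ) {S : Matrix m m ℝ} (h : γ • 1 ≤ S) : IsUnit S.det := by
  have hS : S.PosDef := by simpa using (PosDef.one.smul hγ).add_posSemidef (le_iff.mp h)
  exact (isUnit_iff_isUnit_det S).mp hS.isUnit

variable {l m n : Type*} [Fintype l] [Fintype m] [Fintype n]

theorem frobenius_norm_eq_sqrt (M : Matrix m n ℝ) : ‖M‖ = √(∑ i, ∑ j, M i j ^ 2) := by
  simp [frobenius_norm_def, Real.sqrt_eq_rpow]

theorem frobenius_norm_sq (M : Matrix m n ℝ) : ‖M‖ ^ 2 = (Mᵀ * M).trace := by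
  rw [frobenius_norm_eq_sqrt, Real.sq_sqrt (by positivity), Finset.sum_comm]
  simp [trace, mul_apply, sq]

theorem trace_transpose_mul_le (P Q : Matrix m n ℝ) : (Pᵀ * Q).trace ≤ ‖P‖ * ‖Q‖ := by
  have h := Real.sum_mul_le_sqrt_mul_sqrt Finset.univ (fun p : m × n ↦ P p.1 p.2)
    (fun p ↦ Q p.1 p.2)
  simp only [Fintype.sum_prod_type] at h
  rw [frobenius_norm_eq_sqrt, frobenius_norm_eq_sqrt]
  convert h using 1
  simp only [trace, diag, mul_apply, transpose_apply]
  exact Finset.sum_comm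

theorem trace_transpose_mul_mul_mono {M N : Matrix m m ℝ} (h : M ≤ N) (W : Matrix m n ℝ) :
    (Wᵀ * M * W).trace ≤ (Wᵀ * N * W).trace := by
  have := ((le_iff.mp h).conjTranspose_mul_mul_same W).trace_nonneg
  rw [conjTranspose_eq_transpose_of_trivial, Matrix.mul_sub, Matrix.sub_mul, trace_sub] at this
  linarith

theorem frobenius_norm_mul_sq (U : Matrix l m ℝ) (W : Matrix m n ℝ) :
    ‖U * W‖ ^ 2 = (Wᵀ * (Uᵀ * U) * W).trace := by
  rw [frobenius_norm_sq, transpose_mul]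
  simp only [Matrix.mul_assoc]

theorem trace_transpose_mul_smul_one_mul [DecidableEq m] (c : ℝ) (W : Matrix m n ℝ) :
    (Wᵀ * (c • (1 : Matrix m m ℝ)) * W).trace = c * ‖W‖ ^ 2 := by
  simp [frobenius_norm_sq, trace_smul]

theorem frobenius_norm_mul_le_of_transpose_mul_le [DecidableEq m] {c : ℝ} {U : Matrix l m ℝ}
    (hU : Uᵀ * U ≤ c • 1) (W : Matrix m n ℝ) : ‖U * W‖ ≤ √c * ‖W‖ := by
  have h := trace_transpose_mul_mul_mono hU W
  rw [← frobenius_norm_mul_sq, trace_transpose_mul_smul_one_mul] at h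
  simpa [Real.sqrt_mul' c (sq_nonneg ‖W‖)] using Real.sqrt_le_sqrt h

theorem le_frobenius_norm_mul_of_le_transpose_mul [DecidableEq m] {c : ℝ} {U : Matrix l m ℝ}
    (hU : c • 1 ≤ Uᵀ * U) (W : Matrix m n ℝ) : √c * ‖W‖ ≤ ‖U * W‖ := by
  have h := trace_transpose_mul_mul_mono hU W
  rw [← frobenius_norm_mul_sq, trace_transpose_mul_smul_one_mul] at h
  simpa [Real.sqrt_mul' c (sq_nonneg ‖W‖)] using Real.sqrt_le_sqrt h

theorem frobenius_norm_mul_le_of_mul_transpose_le [DecidableEq m] {c : ℝ} {V : Matrix m l ℝ}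
    (hV : V * Vᵀ ≤ c • 1) (W : Matrix n m ℝ) : ‖W * V‖ ≤ √c * ‖W‖ := by
  rw [← frobenius_norm_transpose, transpose_mul, ← frobenius_norm_transpose W]
  exact frobenius_norm_mul_le_of_transpose_mul_le (by rwa [transpose_transpose]) Wᵀ

theorem frobenius_norm_mul_le_of_isStarProjection [DecidableEq m] {P : Matrix m m ℝ}
    (hP : IsStarProjection P) (G : Matrix m n ℝ) : ‖P * G‖ ≤ ‖G‖ := by
  have hPP : Pᵀ * P ≤ (1 : ℝ) • 1 := by
    rw [one_smul, ← conjTranspose_eq_transpose_of_trivial, ← star_eq_conjTranspose,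
      hP.isSelfAdjoint.star_eq, hP.isIdempotentElem.eq]
    exact hP.le_one
  simpa using frobenius_norm_mul_le_of_transpose_mul_le hPP G

theorem isStarProjection_mul_inv_mul_transpose [DecidableEq l] {C : Matrix m l ℝ}
    (hC : IsUnit (Cᵀ * C).det) : IsStarProjection (C * (Cᵀ * C)⁻¹ * Cᵀ) := by
  refine ⟨?_, ?_⟩
  · calc C * (Cᵀ * C)⁻¹ * Cᵀ * (C * (Cᵀ * C)⁻¹ * Cᵀ)
        = C * ((Cᵀ * C)⁻¹ * (Cᵀ * C)) * (Cᵀ * C)⁻¹ * Cᵀ := by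
          simp only [Matrix.mul_assoc]
      _ = C * (Cᵀ * C)⁻¹ * Cᵀ := by rw [nonsing_inv_mul _ hC, Matrix.mul_one]
  · rw [IsSelfAdjoint, star_eq_conjTranspose, conjTranspose_eq_transpose_of_trivial]
    simp [transpose_nonsing_inv, Matrix.mul_assoc]

theorem frobenius_norm_inv_mul_transpose_mul_le [DecidableEq l] [DecidableEq m] {γ : ℝ}
    (hγ : 0 < γ) {C : Matrix m l ℝ} (hC : γ • 1 ≤ Cᵀ * C) (G : Matrix m n ℝ) :
    ‖(Cᵀ * C)⁻¹ * Cᵀ * G‖ ≤ ‖G‖ / √γ := by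
  rw [le_div_iff₀' (Real.sqrt_pos.mpr hγ)]
  calc √γ * ‖(Cᵀ * C)⁻¹ * Cᵀ * G‖ ≤ ‖C * ((Cᵀ * C)⁻¹ * Cᵀ * G)‖ :=
        le_frobenius_norm_mul_of_le_transpose_mul hC _
    _ = ‖C * (Cᵀ * C)⁻¹ * Cᵀ * G‖ := by simp only [Matrix.mul_assoc]
    _ ≤ ‖G‖ := frobenius_norm_mul_le_of_isStarProjection
          (isStarProjection_mul_inv_mul_transpose (isUnit_det_of_smul_one_le hγ hC)) G

theorem frobenius_norm_mul_transpose_mul_inv_le [DecidableEq l] [DecidableEq m] {γ : ℝ}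
    (hγ : 0 < γ) {A : Matrix l m ℝ} (hA : γ • 1 ≤ A * Aᵀ) (H : Matrix n m ℝ) :
    ‖H * Aᵀ * (A * Aᵀ)⁻¹‖ ≤ ‖H‖ / √γ := by
  have := frobenius_norm_inv_mul_transpose_mul_le hγ (C := Aᵀ)
    (by rwa [transpose_transpose]) Hᵀ
  have e : (H * Aᵀ * (A * Aᵀ)⁻¹)ᵀ = (Aᵀᵀ * Aᵀ)⁻¹ * Aᵀᵀ * Hᵀ := by
    simp [transpose_nonsing_inv, Matrix.mul_assoc]
  rwa [← e, frobenius_norm_transpose, frobenius_norm_transpose] at this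

theorem two_mul_frobenius_norm_sq_le_trace [DecidableEq m] {c : ℝ} {M : Matrix m m ℝ}
    (hM : c • 1 ≤ M) (X : Matrix m m ℝ) :
    2 * c * ‖X‖ ^ 2 ≤ (Xᵀ * (M * X + X * M)).trace := by
  have hleft := trace_transpose_mul_mul_mono hM X
  have hright := trace_transpose_mul_mul_mono hM Xᵀ
  rw [trace_transpose_mul_smul_one_mul] at hleft hright
  rw [transpose_transpose, frobenius_norm_transpose] at hright
  have hcyc : (Xᵀ * (X * M)).trace = (X * M * Xᵀ).trace := by
    rw [trace_mul_comm, Matrix.mul_assoc]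
  rw [Matrix.mul_add, trace_add, hcyc, ← Matrix.mul_assoc]
  linarith

theorem mul_frobenius_norm_le_of_sylvester [DecidableEq m] {c d : ℝ} {M X : Matrix m m ℝ}
    {A Y : Matrix m n ℝ} (hM : c • 1 ≤ M) (hA : A * Aᵀ ≤ d • 1)
    (hX : M * X + X * M = Y * Aᵀ + A * Yᵀ) : c * ‖X‖ ≤ √d * ‖Y‖ := by
  have hXA := frobenius_norm_mul_le_of_mul_transpose_le hA X
  have hXTA := frobenius_norm_mul_le_of_mul_transpose_le hA Xᵀ
  rw [frobenius_norm_transpose] at hXTA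
  have htrace : (Xᵀ * (M * X + X * M)).trace
      = ((X * A)ᵀ * Y).trace + ((Xᵀ * A)ᵀ * Y).trace := by
    rw [hX, Matrix.mul_add, trace_add]
    congr 1
    · rw [transpose_mul, ← Matrix.mul_assoc, trace_mul_cycle]
    · rw [← trace_transpose, transpose_mul, transpose_mul, transpose_transpose, transpose_mul,
        transpose_transpose, Matrix.mul_assoc, trace_mul_comm]
  have hquad : 2 * c * ‖X‖ ^ 2 ≤ 2 * (√d * ‖X‖) * ‖Y‖ := by
    have h1 := trace_transpose_mul_le (X * A) Y
    have h2 := trace_transpose_mul_le (Xᵀ * A) Y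
    have := two_mul_frobenius_norm_sq_le_trace hM X
    nlinarith [norm_nonneg Y]
  rcases (norm_nonneg X).eq_or_lt with h0 | hpos
  · rw [← h0, mul_zero]
    positivity
  · nlinarith

end Matrix

theorem two_mul_sqrt_mul_le {γ Γ g x y : ℝ} (hγ : 0 < γ) (hΓ : 0 ≤ Γ)
    (hx : 2 * γ * x ≤ √Γ * y) (hy : y ≤ g / √γ) :
    2 * (√Γ * x) ≤ g * Γ / γ ^ ((3:ℝ)/2) := by
  have hpow : γ ^ ((3:ℝ)/2) = γ * √γ := by
    rw [show (3:ℝ)/2 = 1 + 1/2 by norm_num, Real.rpow_add hγ, Real.rpow_one, Real.sqrt_eq_rpow]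
  rw [hpow, le_div_iff₀ (by positivity)]
  calc 2 * (√Γ * x) * (γ * √γ) = √Γ * (2 * γ * x) * √γ := by ring
    _ ≤ √Γ * (√Γ * (g / √γ)) * √γ := by grw [hx, hy]
    _ = g * Γ := by field_simp; rw [Real.sq_sqrt hΓ, mul_comm]

theorem frobNorm_eq_norm_s12 {m n : ℕ} (M : Matrix (Fin m) (Fin n) ℝ) : frobNorm M = ‖M‖ :=
  (frobenius_norm_eq_sqrt M).symm

/-- Boundedness of the ODELoRA vector field `(F_A, F_B)`. -/
theorem odelora_field_bound {m n r : ℕ}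
    (γmin γmax L₀ : ℝ) (hγmin : 0 < γmin) (hγmax : 0 < γmax)
    (A : Matrix (Fin r) (Fin n) ℝ) (B : Matrix (Fin m) (Fin r) ℝ)
    (hA1 : (A * Aᵀ - γmin • (1 : Matrix (Fin r) (Fin r) ℝ)).PosSemidef)
    (hA2 : (γmax • (1 : Matrix (Fin r) (Fin r) ℝ) - A * Aᵀ).PosSemidef)
    (hB1 : (Bᵀ * B - γmin • (1 : Matrix (Fin r) (Fin r) ℝ)).PosSemidef)
    (hB2 : (γmax • (1 : Matrix (Fin r) (Fin r) ℝ) - Bᵀ * B).PosSemidef)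
    (G : Matrix (Fin m) (Fin n) ℝ) (hG : frobNorm G ≤ L₀)
    (X : Matrix (Fin r) (Fin r) ℝ)
    (hX : (A * Aᵀ + Bᵀ * B) * X + X * (A * Aᵀ + Bᵀ * B)
        = (Bᵀ * B)⁻¹ * Bᵀ * G * Aᵀ + A * Gᵀ * B * (Bᵀ * B)⁻¹) :
    let FA : Matrix (Fin r) (Fin n) ℝ := -((Bᵀ * B)⁻¹ * Bᵀ * G) + X * A
    let FB : Matrix (Fin m) (Fin r) ℝ :=
      -(((1 : Matrix (Fin m) (Fin m) ℝ) - B * (Bᵀ * B)⁻¹ * Bᵀ) * G * Aᵀ * (A * Aᵀ)⁻¹)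
        - B * X
    frobNorm FA + frobNorm FB
      ≤ 2 * L₀ / Real.sqrt γmin + L₀ * γmax / γmin ^ ((3:ℝ)/2) := by
  intro FA FB
  rw [frobNorm_eq_norm_s12] at hG
  set Y := (Bᵀ * B)⁻¹ * Bᵀ * G
  have hY : ‖Y‖ ≤ ‖G‖ / √γmin := frobenius_norm_inv_mul_transpose_mul_le hγmin hB1 G
  have hprojB : IsStarProjection (B * (Bᵀ * B)⁻¹ * Bᵀ) :=
    isStarProjection_mul_inv_mul_transpose (isUnit_det_of_smul_one_le hγmin hB1)
  have hZ : ‖(1 - B * (Bᵀ * B)⁻¹ * Bᵀ) * G * Aᵀ * (A * Aᵀ)⁻¹‖ ≤ ‖G‖ / √γmin := by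
    grw [frobenius_norm_mul_transpose_mul_inv_le hγmin hA1,
      frobenius_norm_mul_le_of_isStarProjection hprojB.one_sub]
  have hsylv : (A * Aᵀ + Bᵀ * B) * X + X * (A * Aᵀ + Bᵀ * B) = Y * Aᵀ + A * Yᵀ := by
    simp [hX, Y, transpose_nonsing_inv, Matrix.mul_assoc]
  have hM : (2 * γmin) • (1 : Matrix (Fin r) (Fin r) ℝ) ≤ A * Aᵀ + Bᵀ * B := by
    rw [two_mul, add_smul]
    exact add_le_add hA1 hB1
  have hXG := two_mul_sqrt_mul_le hγmin hγmax.le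
    (mul_frobenius_norm_le_of_sylvester hM hA2 hsylv) hY
  have hFA : ‖FA‖ ≤ ‖Y‖ + √γmax * ‖X‖ := by
    grw [norm_add_le, norm_neg, frobenius_norm_mul_le_of_mul_transpose_le hA2 X]
  have hFB : ‖FB‖ ≤ ‖G‖ / √γmin + √γmax * ‖X‖ := by
    grw [norm_sub_le, norm_neg, hZ, frobenius_norm_mul_le_of_transpose_mul_le hB2 X]
  rw [frobNorm_eq_norm_s12, frobNorm_eq_norm_s12]
  calc ‖FA‖ + ‖FB‖ ≤ 2 * ‖G‖ / √γmin + ‖G‖ * γmax / γmin ^ ((3:ℝ)/2) := by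
        rw [mul_div_assoc]; linarith
    _ ≤ _ := by gcongr
end
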